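/- Let f be a morphism on {a,b}* with f(a) = uaav for some words u, v, where f is prolongable on a. For every sequence of positive integers k_1 > k_2 > … > k_t, the word f^{k_1}(ua) f^{k_2}(ua) ⋯ f^{k_t}(ua) f^{k_t}(a) is a prefix of f^{k_1+1}(a). -/

import Mathlib

/-- The extension of a substitution on letters to words. -/
def applyM {α : Type*} (g : α → List α) (w : List α) : List α := w.flatMap g

/-!
Write `w ≤ w'` for "`w` is a prefix of `w'`" and `Fⁿ` for `(applyM f)^[n]`. Since `f(a) = ua · av`,
`Fⁿ(ua) Fⁿ(a) ≤ Fⁿ⁺¹(a)`; since `f` is prolongable on `a`, `Fᵐ(a) ≤ Fⁿ(a)` for `m ≤ n`. By induction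
on `t`, the word `Fᵏ²(ua) ⋯ Fᵏᵗ(ua) Fᵏᵗ(a)` is a prefix of `Fᵏ²⁺¹(a) ≤ Fᵏ¹(a)`, and the first fact
with `n = k₁` finishes the proof.
-/

namespace List

variable {α : Type*} (g : α → List α)

theorem applyM_iterate_append (n : ℕ) (x y : List α) :
    (applyM g)^[n] (x ++ y) = (applyM g)^[n] x ++ (applyM g)^[n] y := by
  induction n generalizing x y with
  | zero => rfl
  | succ n ih => simp only [Function.iterate_succ_apply, applyM, flatMap_append, ih]

theorem IsPrefix.applyM_iterate {x y : List α} (h : x <+: y) (n : ℕ) :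
    (applyM g)^[n] x <+: (applyM g)^[n] y := by
  obtain ⟨z, rfl⟩ := h
  rw [applyM_iterate_append]
  exact prefix_append _ _

variable {g} {a : α}

theorem applyM_iterate_singleton_prefix_of_le (hprol : [a] <+: g a) {m n : ℕ} (hmn : m ≤ n) :
    (applyM g)^[m] [a] <+: (applyM g)^[n] [a] := by
  induction n, hmn using Nat.le_induction with
  | base => exact prefix_rfl
  | succ n _ ih =>
    refine ih.trans ?_
    have hga : applyM g [a] = g a := by simp [applyM]
    rw [Function.iterate_succ_apply, hga]
    exact hprol.applyM_iterate g n

theorem applyM_iterate_append_prefix_succ {u v : List α} (hfa : g a = u ++ [a, a] ++ v) (n : ℕ) :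
    (applyM g)^[n] (u ++ [a]) ++ (applyM g)^[n] [a] <+: (applyM g)^[n + 1] [a] := by
  have hga : applyM g [a] = (u ++ [a]) ++ [a] ++ v := by simp [applyM, hfa]
  rw [Function.iterate_succ_apply, hga, applyM_iterate_append g n (u ++ [a] ++ [a]),
    applyM_iterate_append g n (u ++ [a])]
  exact prefix_append _ _

theorem flatMap_applyM_iterate_append_prefix {u v : List α} (hprol : [a] <+: g a)
    (hfa : g a = u ++ [a, a] ++ v) (L : List ℕ) (hL : L ≠ []) (hsorted : L.Pairwise (· > ·)) :
    L.flatMap (fun m => (applyM g)^[m] (u ++ [a])) ++ (applyM g)^[L.getLast hL] [a] <+: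
      (applyM g)^[L.head hL + 1] [a] := by
  induction L with
  | nil => exact absurd rfl hL
  | cons n L ih =>
    cases L with
    | nil => simpa using applyM_iterate_append_prefix_succ hfa n
    | cons m L =>
      have hmn : m + 1 ≤ n := (pairwise_cons.mp hsorted).1 m mem_cons_self
      have htail := (ih (cons_ne_nil m L) (pairwise_cons.mp hsorted).2).trans
        (applyM_iterate_singleton_prefix_of_le hprol hmn)
      rw [getLast_cons (cons_ne_nil m L), flatMap_cons, append_assoc]
      exact (prefix_append_right_inj _).mpr htail |>.trans (applyM_iterate_append_prefix_succ hfa n)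

end List

/-- Letters: `a = true`, `b = false`. -/
theorem stmt_12 (fm : Bool → List Bool)
    (hprol : ∃ w : List Bool, w ≠ [] ∧ fm true = true :: w)
    (u v : List Bool) (hfa : fm true = u ++ [true, true] ++ v)
    (t : ℕ) (ht : 0 < t) (k : Fin t → ℕ)
    (hanti : StrictAnti k) :
    ((List.ofFn (fun i : Fin t => (applyM fm)^[k i] (u ++ [true]))).flatten ++
        (applyM fm)^[k ⟨t - 1, by omega⟩] [true]) <+:
      (applyM fm)^[k ⟨0, ht⟩ + 1] [true] := by
  obtain ⟨w, -, hw⟩ := hprol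
  have hprefix : [true] <+: fm true := by rw [hw]; exact List.prefix_append _ _
  have hsorted : (List.ofFn k).Pairwise (· > ·) := List.pairwise_ofFn.mpr fun _ _ h => hanti h
  have h := List.flatMap_applyM_iterate_append_prefix hprefix hfa (List.ofFn k)
    (mt List.ofFn_eq_nil_iff.1 ht.ne') hsorted
  rwa [List.flatMap_def, List.map_ofFn, List.getLast_ofFn, List.head_ofFn] at h
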